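/- arXiv:2011.11101 — 3 statements merged into one kernel-verified Lean document; each statement's English description precedes it below -/
import Mathlib

section
/- Let q be a prime power, let x ∈ GF(q³) \ GF(q), and consider the map γ of PG(1,q³) induced by the matrix with rows (a,b) and (c,d) with entries in GF(q) and nonzero determinant. Define S_x = {(t^q - t : x t - x^q t^q) : t ∈ GF(q³)*} ⊆ PG(1,q³). Then γ(S_x) = S_{(c-dx)/(bx-a)} whenever bx - a ≠ 0, and γ(S_x) = S_x if and only if γ is the identity (i.e., b = c = 0 and a = d up to scalar). -/
/-!
The matrix sends the vector of `t` spanning a point of `S_x` to the vector of `(a - bx) t` in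
`S_{x'}`, `x' = (c - dx)/(bx - a)`; this is the first claim.

For the second, write `N = q² + q + 1`. The points `(1 : y)` of `S_x` are `q² + q` values of `y`
with `(y + x)/(y + x^q) = t^(q-1)`, an element of norm `1`, so `(y + x)^N = (y + x^q)^N`.
Expanding with the Frobenius, this reads `(x - x^q) y^(q²+q) + R_x(y) = 0` with `deg R_x ≤ q² + 1`.
If `S_x ⊆ S_{x'}`, then `(x' - x'^q) R_x - (x - x^q) R_{x'}` has degree `< q² + q` and
`q² + q` roots, so it vanishes; its coefficient of `X` is `(x - x^q)(x' - x'^q)(x'^(q²) - x^(q²))`,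
whence `x = x'`. So `γ(S_x) = S_x` forces `x (bx - a) = c - dx`, a quadratic relation over
`GF(q)` that an element of degree `3` satisfies only if `b = c = 0` and `a = d`.
-/

open scoped LinearAlgebra.Projectivization
open Projectivization

/-- The splash `S_x = {(t^q - t : x t - x^q t^q) : t ∈ GF(q³)*}` of `PG(1, q³)`. -/
def splash (q : ℕ) {L : Type*} [Field L] (x : L) : Set (ℙ L (L × L)) :=
  {P : ℙ L (L × L) | ∃ t : L, t ≠ 0 ∧
    ∃ h : ((t ^ q - t, x * t - x ^ q * t ^ q) : L × L) ≠ 0,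
      P = Projectivization.mk L (t ^ q - t, x * t - x ^ q * t ^ q) h}

/-- The `L`-linear map on `L × L` induced by the matrix with rows `(a, b)` and `(c, d)`,
with entries in the subfield `K`. -/
def matMap {K L : Type*} [Field K] [Field L] [Algebra K L] (a b c d : K) :
    (L × L) →ₗ[L] (L × L) where
  toFun p := (algebraMap K L a * p.1 + algebraMap K L b * p.2,
              algebraMap K L c * p.1 + algebraMap K L d * p.2)
  map_add' p r := by simp [Prod.ext_iff]; constructor <;> ring
  map_smul' m p := by simp [Prod.ext_iff, smul_eq_mul]; constructor <;> ring

open Polynomial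

section Frobenius

variable {q : ℕ} {K L : Type*} [Field K] [Field L] [Algebra K L] [Fintype K]

lemma add_pow_card (hK : Fintype.card K = q) (y z : L) : (y + z) ^ q = y ^ q + z ^ q := by
  subst hK
  exact map_add (FiniteField.frobeniusAlgHom K L) y z

lemma sub_pow_card (hK : Fintype.card K = q) (y z : L) : (y - z) ^ q = y ^ q - z ^ q := by
  subst hK
  exact map_sub (FiniteField.frobeniusAlgHom K L) y z

lemma algebraMap_pow_card (hK : Fintype.card K = q) (k : K) :
    algebraMap K L k ^ q = algebraMap K L k := by
  subst hK
  exact (FiniteField.frobeniusAlgHom K L).commutes k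

lemma pow_card_eq_self_iff [Finite L] (hK : Fintype.card K = q) (y : L) :
    y ^ q = y ↔ y ∈ (algebraMap K L).range := by
  refine ⟨fun hy => ?_, by rintro ⟨k, rfl⟩; exact algebraMap_pow_card hK k⟩
  subst hK
  refine (IsGalois.mem_range_algebraMap_iff_fixed y).2 fun f => ?_
  obtain ⟨n, rfl⟩ := (FiniteField.bijective_frobeniusAlgEquivOfAlgebraic_pow K L).2 f
  rw [AlgEquiv.coe_pow]
  exact Function.iterate_fixed hy n

lemma finrank_eq_of_card_eq_pow [Fintype L] {n : ℕ} (hK : Fintype.card K = q)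
    (hL : Fintype.card L = q ^ n) : Module.finrank K L = n :=
  Nat.pow_right_injective (hK ▸ Fintype.one_lt_card)
    (by simp only; rw [← hK, ← Module.card_eq_pow_finrank, hL, hK])

end Frobenius

lemma pow_pow_pow_eq_self {q : ℕ} {L : Type*} [Field L] [Fintype L]
    (hL : Fintype.card L = q ^ 3) (y : L) : ((y ^ q) ^ q) ^ q = y := by
  rw [← pow_mul, ← pow_mul, show q * (q * q) = q ^ 3 by ring, ← hL, FiniteField.pow_card]

section Degree

variable {K L : Type*} [Field K] [Field L] [Algebra K L] {x : L}

lemma eq_zero_of_algebraMap_mul_eq (hx : x ∉ (algebraMap K L).range) {b a : K}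
    (h : algebraMap K L b * x = algebraMap K L a) : b = 0 ∧ a = 0 := by
  by_cases hb : b = 0
  · subst hb
    simp only [map_zero, zero_mul] at h
    exact ⟨rfl, (map_eq_zero_iff _ (algebraMap K L).injective).1 h.symm⟩
  · refine absurd ⟨a / b, ?_⟩ hx
    rw [map_div₀, div_eq_iff ((_root_.map_ne_zero _).2 hb), ← h, mul_comm]

lemma eq_zero_of_quadratic_eq_zero [FiniteDimensional K L] (h3 : Module.finrank K L = 3)
    (hx : x ∉ (algebraMap K L).range) {b e f : K}
    (h : algebraMap K L b * x ^ 2 + algebraMap K L e * x + algebraMap K L f = 0) :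
    b = 0 ∧ e = 0 ∧ f = 0 := by
  set p : K[X] := C b * X ^ 2 + C e * X + C f
  have hp : p = 0 := by
    by_contra hp
    have hint : IsIntegral K x := .of_finite K x
    have hle : (minpoly K x).natDegree ≤ 2 :=
      (natDegree_le_of_dvd (minpoly.dvd K x (by simp [p, h])) hp).trans (by
        simp only [p]; compute_degree)
    have hdvd : (minpoly K x).natDegree ∣ 3 := h3 ▸ minpoly.degree_dvd hint
    have h2 := (minpoly.two_le_natDegree_iff hint).2 hx
    rw [show (minpoly K x).natDegree = 2 by omega] at hdvd
    norm_num at hdvd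
  refine ⟨?_, ?_, ?_⟩
  · simpa [p] using congrArg (coeff · 2) hp
  · simpa [p] using congrArg (coeff · 1) hp
  · simpa [p] using congrArg (coeff · 0) hp

variable {a b c d : K}

lemma algebraMap_mul_sub_ne_zero (hx : x ∉ (algebraMap K L).range) (hdet : a * d - b * c ≠ 0) :
    algebraMap K L b * x - algebraMap K L a ≠ 0 := by
  intro h
  obtain ⟨rfl, rfl⟩ := eq_zero_of_algebraMap_mul_eq hx (sub_eq_zero.1 h)
  exact hdet (by ring)

lemma div_algebraMap_mul_sub_notMem_range (hx : x ∉ (algebraMap K L).range)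
    (hdet : a * d - b * c ≠ 0) :
    (algebraMap K L c - algebraMap K L d * x) / (algebraMap K L b * x - algebraMap K L a) ∉
      (algebraMap K L).range := by
  rintro ⟨k, hk⟩
  rw [eq_div_iff (algebraMap_mul_sub_ne_zero hx hdet)] at hk
  obtain ⟨h1, h2⟩ := eq_zero_of_algebraMap_mul_eq hx (b := k * b + d) (a := c + k * a) (by
    simp only [map_add, map_mul]
    linear_combination hk)
  exact hdet (by linear_combination a * h1 - b * h2)

end Degree

section Splash

variable {q : ℕ} {L : Type*} [Field L]

def splashVec (q : ℕ) (x t : L) : L × L := (t ^ q - t, x * t - x ^ q * t ^ q)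

lemma mem_splash_iff {x : L} {P : ℙ L (L × L)} :
    P ∈ splash q x ↔ ∃ t ≠ 0, ∃ h : splashVec q x t ≠ 0, P = mk L (splashVec q x t) h :=
  Iff.rfl

lemma splashVec_ne_zero {x t : L} (hx : x ^ q ≠ x) (ht : t ≠ 0) : splashVec q x t ≠ 0 := by
  intro h
  have htq : t ^ q = t := sub_eq_zero.1 (congrArg Prod.fst h)
  have h2 : t * (x - x ^ q) = 0 := by
    have := congrArg Prod.snd h
    simp only [splashVec, htq, Prod.snd_zero] at this
    linear_combination this
  rcases mul_eq_zero.1 h2 with h | h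
  exacts [ht h, hx (sub_eq_zero.1 h).symm]

variable {K : Type*} [Field K] [Algebra K L] [Fintype K]

lemma matMap_splashVec (hK : Fintype.card K = q) {x : L} {a b c d : K}
    (hbx : algebraMap K L b * x - algebraMap K L a ≠ 0) (t : L) :
    matMap a b c d (splashVec q x t) =
      splashVec q ((algebraMap K L c - algebraMap K L d * x) /
        (algebraMap K L b * x - algebraMap K L a))
        ((algebraMap K L a - algebraMap K L b * x) * t) := by
  set x' := (algebraMap K L c - algebraMap K L d * x) / (algebraMap K L b * x - algebraMap K L a)
  have hx' : (algebraMap K L a - algebraMap K L b * x) * x' =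
      algebraMap K L d * x - algebraMap K L c := by
    simp only [x']; field_simp; ring
  have hx'q : (algebraMap K L a - algebraMap K L b * x ^ q) * x' ^ q =
      algebraMap K L d * x ^ q - algebraMap K L c := by
    simpa only [mul_pow, sub_pow_card hK, algebraMap_pow_card hK] using congrArg (· ^ q) hx'
  clear_value x'
  simp only [matMap, splashVec, LinearMap.coe_mk, AddHom.coe_mk, mul_pow, sub_pow_card hK,
    algebraMap_pow_card hK]
  ext
  · ring
  · linear_combination t ^ q * hx'q - t * hx'

lemma image_map_splash (hK : Fintype.card K = q) {x : L} (hx : x ^ q ≠ x) {a b c d : K}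
    (hinj : Function.Injective (matMap (L := L) a b c d))
    (hbx : algebraMap K L b * x - algebraMap K L a ≠ 0) :
    Projectivization.map (matMap (L := L) a b c d) hinj '' splash q x =
      splash q ((algebraMap K L c - algebraMap K L d * x) /
        (algebraMap K L b * x - algebraMap K L a)) := by
  have hμ : algebraMap K L a - algebraMap K L b * x ≠ 0 := fun h => hbx (by linear_combination -h)
  ext P
  constructor
  · rintro ⟨_, hQ, rfl⟩
    obtain ⟨t, ht, hv, rfl⟩ := mem_splash_iff.1 hQ
    refine mem_splash_iff.2 ⟨_, mul_ne_zero hμ ht, ?_, ?_⟩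
    · rw [← matMap_splashVec hK hbx]
      exact (map_ne_zero_iff _ hinj).2 hv
    · simp only [map_mk, matMap_splashVec hK hbx]
  · intro hP
    obtain ⟨s, hs, hv, rfl⟩ := mem_splash_iff.1 hP
    have ht : (algebraMap K L a - algebraMap K L b * x)⁻¹ * s ≠ 0 := by simp [hμ, hs]
    refine ⟨_, mem_splash_iff.2 ⟨_, ht, splashVec_ne_zero hx ht, rfl⟩, ?_⟩
    simp only [map_mk, matMap_splashVec hK hbx, mul_inv_cancel_left₀ hμ]

end Splash

section SplashPolynomial

variable {q : ℕ} {L : Type*} [Field L]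

/-- The terms of degree `≤ q² + 1` of
`(X + x)(X^q + x^q)(X^(q²) + x^(q²)) - (X + x^q)(X^q + x^(q²))(X^(q²) + x)`. -/
noncomputable def splashTail (q : ℕ) (x : L) : L[X] :=
  C (x ^ q - x ^ q ^ 2) * X ^ (q ^ 2 + 1) + C (x ^ q ^ 2 - x) * X ^ (q + 1)
    + C (x ^ (q + 1) - x ^ (q ^ 2 + q)) * X ^ q ^ 2 + C (x ^ (q ^ 2 + 1) - x ^ (q + 1)) * X ^ q
    + C (x ^ (q ^ 2 + q) - x ^ (q ^ 2 + 1)) * X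

lemma eval_splashTail {K : Type*} [Field K] [Algebra K L] [Fintype K] [Fintype L]
    (hK : Fintype.card K = q) (hL : Fintype.card L = q ^ 3) (x y : L) :
    (y + x) ^ (q ^ 2 + q + 1) - (y + x ^ q) ^ (q ^ 2 + q + 1) =
      (x - x ^ q) * y ^ (q ^ 2 + q) + (splashTail q x).eval y := by
  have hN : ∀ z : L, (y + z) ^ (q ^ 2 + q + 1) =
      (y + z) * (y ^ q + z ^ q) * ((y ^ q) ^ q + (z ^ q) ^ q) := by
    intro z
    rw [← add_pow_card hK, ← add_pow_card hK, ← add_pow_card hK]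
    ring
  rw [hN, hN, pow_pow_pow_eq_self hL]
  simp only [splashTail, eval_add, eval_mul, eval_C, eval_pow, eval_X]
  ring

lemma natDegree_splashTail_le (x : L) : (splashTail q x).natDegree ≤ q ^ 2 + 1 := by
  unfold splashTail
  compute_degree
  exact Nat.succ_le_succ (max_le le_rfl (Nat.le_self_pow two_ne_zero q))

lemma coeff_splashTail_one (hq : 2 ≤ q) (x : L) :
    (splashTail q x).coeff 1 = x ^ (q ^ 2 + q) - x ^ (q ^ 2 + 1) := by
  have h1 : 1 ≠ q ^ 2 + 1 := by
    have : 0 < q ^ 2 := by positivity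
    omega
  have h2 : 1 ≠ q + 1 := by omega
  have h3 : 1 ≠ q ^ 2 := by nlinarith
  have h4 : 1 ≠ q := by omega
  simp only [splashTail, coeff_add, coeff_C_mul, coeff_X_pow, coeff_X_one, if_neg h1, if_neg h2,
    if_neg h3, if_neg h4]
  ring

end SplashPolynomial

section AffineSplash

open Finset

variable {q : ℕ} {L : Type*} [Field L] [Fintype L] [DecidableEq L]

/-- The `y` with `(1 : y) ∈ S_x`; the parameter `t` of such a point satisfies `t^q ≠ t`. -/
def affineSplash (q : ℕ) (x : L) : Finset L :=
  ({t : L | t ^ q ≠ t} : Finset L).image fun t => (x * t - x ^ q * t ^ q) / (t ^ q - t)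

lemma mem_affineSplash {x y : L} :
    y ∈ affineSplash q x ↔ ∃ t, t ^ q ≠ t ∧ (x * t - x ^ q * t ^ q) / (t ^ q - t) = y := by
  simp [affineSplash]

lemma affineSplash_subset (hq : q ≠ 0) {x x' : L} (h : splash q x ⊆ splash q x') :
    affineSplash q x ⊆ affineSplash q x' := by
  intro y hy
  obtain ⟨t, ht, rfl⟩ := mem_affineSplash.1 hy
  have ht0 : t ≠ 0 := by rintro rfl; exact ht (zero_pow hq)
  have htq : t ^ q - t ≠ 0 := sub_ne_zero.2 ht
  obtain ⟨s, -, hsv, hts⟩ := mem_splash_iff.1 (h (mem_splash_iff.2 ⟨t, ht0, fun h0 =>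
    htq (congrArg Prod.fst h0), rfl⟩))
  obtain ⟨l, hl⟩ := (mk_eq_mk_iff' L _ _ _ _).1 hts
  simp only [splashVec, Prod.smul_mk, smul_eq_mul, Prod.mk.injEq] at hl
  obtain ⟨h1, h2⟩ := hl
  have hsq : s ^ q - s ≠ 0 := fun h0 => htq (by rw [← h1, h0, mul_zero])
  have hl0 : l ≠ 0 := fun h0 => htq (by rw [← h1, h0, zero_mul])
  refine mem_affineSplash.2 ⟨s, sub_ne_zero.1 hsq, ?_⟩
  rw [← h1, ← h2, mul_div_mul_left _ _ hl0]

lemma pow_eq_pow_of_mem_affineSplash (hL : Fintype.card L = q ^ 3) {x y : L}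
    (hy : y ∈ affineSplash q x) : (y + x) ^ (q ^ 2 + q + 1) = (y + x ^ q) ^ (q ^ 2 + q + 1) := by
  obtain ⟨t, ht, rfl⟩ := mem_affineSplash.1 hy
  have htq : t ^ q - t ≠ 0 := sub_ne_zero.2 ht
  have h1 : (x * t - x ^ q * t ^ q) / (t ^ q - t) + x = t ^ q * ((x - x ^ q) / (t ^ q - t)) := by
    field_simp; ring
  have h2 : (x * t - x ^ q * t ^ q) / (t ^ q - t) + x ^ q = t * ((x - x ^ q) / (t ^ q - t)) := by
    field_simp; ring
  have h3 : (t ^ q) ^ (q ^ 2 + q + 1) = t ^ (q ^ 2 + q + 1) :=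
    calc (t ^ q) ^ (q ^ 2 + q + 1) = t ^ q ^ 3 * t ^ (q ^ 2 + q) := by ring
      _ = _ := by rw [← hL, FiniteField.pow_card]; ring
  rw [h1, h2, mul_pow, mul_pow, h3]

variable {K : Type*} [Field K] [Algebra K L] [Fintype K]

lemma card_pow_card_eq_self (hK : Fintype.card K = q) : #{t : L | t ^ q = t} = q := by
  have : ({t : L | t ^ q = t} : Finset L) = univ.image (algebraMap K L) := by
    ext t
    simp [pow_card_eq_self_iff hK, RingHom.mem_range]
  rw [this, card_image_of_injective _ (algebraMap K L).injective, card_univ, hK]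

lemma card_fiber_affineSplash_le (hK : Fintype.card K = q) {x : L} (hx : x ^ q ≠ x) (y : L) :
    #{t ∈ ({t : L | t ^ q ≠ t} : Finset L) | (x * t - x ^ q * t ^ q) / (t ^ q - t) = y} ≤
      q - 1 := by
  have hq : q ≠ 0 := hK ▸ Fintype.card_ne_zero
  set fiber := {t ∈ ({t : L | t ^ q ≠ t} : Finset L) | (x * t - x ^ q * t ^ q) / (t ^ q - t) = y}
  rcases fiber.eq_empty_or_nonempty with hempty | ⟨t₀, ht₀⟩
  · simp [hempty]
  simp only [fiber, mem_filter, mem_univ, true_and] at ht₀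
  obtain ⟨ht₀q, rfl⟩ := ht₀
  have ht₀0 : t₀ ≠ 0 := by rintro rfl; exact ht₀q (zero_pow hq)
  calc #fiber ≤ #(({u : L | u ^ q = u} : Finset L).erase 0) := by
        refine card_le_card_of_injOn (· / t₀) (fun t ht => ?_)
          fun a _ b _ h => (div_left_inj' ht₀0).1 h
        simp only [fiber, mem_coe, mem_filter, mem_univ, true_and] at ht
        obtain ⟨htq, heq⟩ := ht
        have ht0 : t ≠ 0 := by rintro rfl; exact htq (zero_pow hq)
        rw [div_eq_div_iff (sub_ne_zero.2 htq) (sub_ne_zero.2 ht₀q)] at heq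
        have hcross : (x - x ^ q) * (t ^ q * t₀ - t * t₀ ^ q) = 0 := by linear_combination -heq
        have hcross' := sub_eq_zero.1 ((mul_eq_zero.1 hcross).resolve_left (sub_ne_zero.2 hx.symm))
        simp only [mem_coe, mem_erase, mem_filter, mem_univ, true_and]
        refine ⟨div_ne_zero ht0 ht₀0, ?_⟩
        rw [div_pow, div_eq_div_iff (pow_ne_zero q ht₀0) ht₀0, hcross']
    _ = q - 1 := by rw [card_erase_of_mem (by simp [zero_pow hq]), card_pow_card_eq_self hK]

lemma card_affineSplash (hK : Fintype.card K = q) (hL : Fintype.card L = q ^ 3) {x : L}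
    (hx : x ^ q ≠ x) : q ^ 2 + q ≤ #(affineSplash q x) := by
  have hq : 2 ≤ q := hK ▸ Fintype.one_lt_card
  have hcard : #{t : L | t ^ q ≠ t} = q ^ 3 - q := by
    have := card_filter_add_card_filter_not (s := univ) fun t : L => t ^ q = t
    rw [card_pow_card_eq_self hK, card_univ, hL] at this
    simp only [ne_eq]
    omega
  have := card_le_mul_card_image _ (q - 1) fun y _ => card_fiber_affineSplash_le hK hx y
  have key : (q - 1) * (q ^ 2 + q) = q ^ 3 - q := by
    obtain ⟨r, rfl⟩ : ∃ r, q = r + 1 := ⟨q - 1, by omega⟩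
    rw [Nat.add_sub_cancel]
    exact (Nat.sub_eq_of_eq_add (by ring)).symm
  rw [hcard, ← key] at this
  exact Nat.le_of_mul_le_mul_left this (by omega)

end AffineSplash

lemma eq_of_splash_subset {q : ℕ} {K L : Type*} [Field K] [Field L] [Algebra K L] [Fintype K]
    [Fintype L] (hK : Fintype.card K = q) (hL : Fintype.card L = q ^ 3) {x x' : L}
    (hx : x ^ q ≠ x) (hx' : x' ^ q ≠ x') (h : splash q x ⊆ splash q x') : x = x' := by
  classical
  have hq : 2 ≤ q := hK ▸ Fintype.one_lt_card
  set Q := C (x' - x' ^ q) * splashTail q x - C (x - x ^ q) * splashTail q x'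
  have hroots : ∀ y ∈ affineSplash q x, Q.eval y = 0 := by
    intro y hy
    have h1 := eval_splashTail hK hL x y
    have h2 := eval_splashTail hK hL x' y
    rw [pow_eq_pow_of_mem_affineSplash hL hy, sub_self] at h1
    rw [pow_eq_pow_of_mem_affineSplash hL (affineSplash_subset (by omega) h hy), sub_self] at h2
    simp only [Q, eval_sub, eval_mul, eval_C]
    linear_combination (x - x ^ q) * h2 - (x' - x' ^ q) * h1
  have hdeg : Q.natDegree < (affineSplash q x).card :=
    calc Q.natDegree ≤ max (q ^ 2 + 1) (q ^ 2 + 1) := natDegree_sub_le_of_le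
          (natDegree_C_mul_le _ _ |>.trans (natDegree_splashTail_le x))
          (natDegree_C_mul_le _ _ |>.trans (natDegree_splashTail_le x'))
      _ < q ^ 2 + q := by rw [max_self]; omega
      _ ≤ _ := card_affineSplash hK hL hx
  have hQ := congrArg (coeff · 1) (eq_zero_of_natDegree_lt_card_of_eval_eq_zero' Q _ hroots hdeg)
  simp only [Q, coeff_sub, coeff_C_mul, coeff_splashTail_one hq, coeff_zero] at hQ
  have : (x - x ^ q) * (x' - x' ^ q) * ((x ^ q) ^ q - (x' ^ q) ^ q) = 0 := by
    linear_combination -hQ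
  rw [← pow_pow_pow_eq_self hL x, ← pow_pow_pow_eq_self hL x', sub_eq_zero.1
    ((mul_eq_zero.1 this).resolve_left
      (mul_ne_zero (sub_ne_zero.2 hx.symm) (sub_ne_zero.2 hx'.symm)))]

/-- For `x ∈ GF(q³) \ GF(q)` and a projectivity `γ` of `PG(1,q³)` induced by an invertible
matrix with rows `(a,b)`, `(c,d)` over `GF(q)`: if `bx - a ≠ 0` then
`γ(S_x) = S_{(c - dx)/(bx - a)}`; and `γ(S_x) = S_x` if and only if `γ` is the identity,
i.e. `b = c = 0` and `a = d`. -/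
theorem statement2 (q : ℕ) (K L : Type*) [Field K] [Field L] [Algebra K L]
    [Fintype K] [Fintype L] (hK : Fintype.card K = q) (hL : Fintype.card L = q ^ 3)
    (x : L) (hx : x ∉ (algebraMap K L).range)
    (a b c d : K) (hdet : a * d - b * c ≠ 0)
    (hinj : Function.Injective (matMap (L := L) a b c d)) :
    ((algebraMap K L b * x - algebraMap K L a ≠ 0 →
        Projectivization.map (matMap (L := L) a b c d) hinj '' splash q x =
          splash q ((algebraMap K L c - algebraMap K L d * x) /
            (algebraMap K L b * x - algebraMap K L a))) ∧
      (Projectivization.map (matMap (L := L) a b c d) hinj '' splash q x = splash q x ↔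
        b = 0 ∧ c = 0 ∧ a = d)) := by
  have hxq : x ^ q ≠ x := mt (pow_card_eq_self_iff hK x).1 hx
  have hbx := algebraMap_mul_sub_ne_zero hx hdet
  have himage := image_map_splash hK hxq hinj hbx
  refine ⟨fun _ => himage, fun h => ?_, ?_⟩
  · have hx'q := mt (pow_card_eq_self_iff hK _).1 (div_algebraMap_mul_sub_notMem_range hx hdet)
    have hxx' := eq_of_splash_subset hK hL hx'q hxq (himage ▸ h).le
    rw [div_eq_iff hbx] at hxx'
    obtain ⟨hb, hda, hc⟩ := eq_zero_of_quadratic_eq_zero (finrank_eq_of_card_eq_pow hK hL) hx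
      (b := b) (e := d - a) (f := -c) (by
        simp only [map_sub, map_neg]
        linear_combination -hxx')
    exact ⟨hb, neg_eq_zero.1 hc, (sub_eq_zero.1 hda).symm⟩
  · rintro ⟨rfl, rfl, rfl⟩
    have ha : algebraMap K L a ≠ 0 := by simpa using hbx
    rw [himage, map_zero, zero_mul, zero_sub, zero_sub, neg_div_neg_eq, mul_div_cancel_left₀ x ha]
end

section
/- Let q be a prime power and x ∈ GF(q) with x ≠ 0 and x³ ≠ 1. Then there are no δ ∈ GF(q) \ {0,1} and t ∈ GF(q²) \ GF(q) satisfying simultaneously δ t^{q+1} + (δ-1)(t^q + t) - 1 = 0 and δ x t^{q+1} + (1-δ-x) t^q + δ((δ-1)x - δ) t + δ = 0. -/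
/-!
Let `t̄ = t ^ q` be the conjugate of `t`. Applying the Frobenius to the second equation swaps
the coefficients of `t` and `t̄`; since `t̄ ≠ t`, they must agree, which (as `x ≠ 1`) forces
`δ² - δ + 1 = 0`. The two equations are then linear in the trace `t + t̄` and the norm `t t̄`,
and solving them (using `x + δ ≠ 0`, i.e. `x ≠ -δ`, a cube root of unity) gives trace `1/δ`
and norm `-δ`. So `t` is a root of `(X - 1)(X + δ)`, hence lies in `GF(q)`.
-/

namespace FiniteField

theorem pow_card_pow_card_of_card_eq_sq {K L : Type*} [Fintype K] [Field L] [Fintype L]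
    (hL : Fintype.card L = Fintype.card K ^ 2) (y : L) :
    (y ^ Fintype.card K) ^ Fintype.card K = y := by
  rw [← pow_mul, ← sq, ← hL, pow_card]

variable {K L : Type*} [Field K] [Fintype K] [Field L] [Fintype L] [Algebra K L]

theorem mem_range_algebraMap_of_pow_card_eq_self {y : L} (hy : y ^ Fintype.card K = y) :
    y ∈ (algebraMap K L).range := by
  have hfixed : ∀ σ : Gal(L/K), σ y = y := by
    intro σ
    obtain ⟨n, rfl⟩ := (bijective_frobeniusAlgEquivOfAlgebraic_pow K L).2 σ
    rw [AlgEquiv.coe_pow]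
    exact Function.IsFixedPt.iterate hy n
  exact IntermediateField.mem_bot.1 ((IsGalois.mem_bot_iff_fixed y).2 hfixed)

theorem coeff_pow_card_eq_coeff_of_notMem_range (hL : Fintype.card L = Fintype.card K ^ 2)
    {t : L} (ht : t ∉ (algebraMap K L).range) {a b c e : K}
    (h : algebraMap K L a * t ^ (Fintype.card K + 1) + algebraMap K L b * t ^ Fintype.card K +
      algebraMap K L c * t + algebraMap K L e = 0) :
    b = c := by
  set q := Fintype.card K
  have hconj := congrArg (frobeniusAlgHom K L) h
  simp only [map_add, map_mul, map_pow, AlgHom.commutes, map_zero, coe_frobeniusAlgHom]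
    at hconj
  rw [pow_succ, pow_card_pow_card_of_card_eq_sq hL] at hconj
  have hne : t ^ q - t ≠ 0 :=
    sub_ne_zero.2 fun hfix ↦ ht (mem_range_algebraMap_of_pow_card_eq_self hfix)
  have hbc : (algebraMap K L b - algebraMap K L c) * (t ^ q - t) = 0 := by
    linear_combination h - hconj
  exact (algebraMap K L).injective (sub_eq_zero.1 ((mul_eq_zero.1 hbc).resolve_right hne))

end FiniteField

theorem sub_one_mul_add_eq_zero_of_trace_norm_eqs {F : Type*} [Field F] {d X s t : F}
    (hd : d ≠ 0) (hXd : X + d ≠ 0) (hd2 : d ^ 2 - d + 1 = 0)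
    (e1 : d * (s * t) + (d - 1) * (s + t) - 1 = 0)
    (e2 : d * X * (s * t) + (1 - d - X) * s + d * ((d - 1) * X - d) * t + d = 0) :
    (t - 1) * (t + d) = 0 := by
  have htrace : d * (s + t) - 1 = 0 := by
    have : (X + d) * (d * (s + t) - 1) = 0 := by
      linear_combination X * e1 - e2 + (s + X * t) * hd2
    exact (mul_eq_zero.1 this).resolve_left hXd
  have : d ^ 2 * ((t - 1) * (t + d)) = 0 := by
    linear_combination (d * t - d - 1) * hd2 + (d * t + d - 1) * htrace - d * e1
  exact (mul_eq_zero.1 this).resolve_left (pow_ne_zero 2 hd)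

theorem statement4_general (q : ℕ) (K L : Type*) [Field K] [Field L] [Algebra K L]
    [Fintype K] [Fintype L] (hK : Fintype.card K = q) (hL : Fintype.card L = q ^ 2)
    (x : K) (hx3 : x ^ 3 ≠ 1) :
    ¬ ∃ (δ : K) (t : L), δ ≠ 0 ∧ δ ≠ 1 ∧ t ∉ (algebraMap K L).range ∧
      algebraMap K L δ * t ^ (q + 1) + (algebraMap K L δ - 1) * (t ^ q + t) - 1 = 0 ∧
      algebraMap K L (δ * x) * t ^ (q + 1) + algebraMap K L (1 - δ - x) * t ^ q +
        algebraMap K L (δ * ((δ - 1) * x - δ)) * t + algebraMap K L δ = 0 := by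
  subst hK
  rintro ⟨δ, t, hδ0, -, ht, h1, h2⟩
  have hcoeff := FiniteField.coeff_pow_card_eq_coeff_of_notMem_range hL ht h2
  have hx1 : x ≠ 1 := by rintro rfl; exact hx3 (one_pow 3)
  have hδ : δ ^ 2 - δ + 1 = 0 := by
    have : (δ ^ 2 - δ + 1) * (x - 1) = 0 := by linear_combination -hcoeff
    exact (mul_eq_zero.1 this).resolve_right (sub_ne_zero.2 hx1)
  have hxδ : x + δ ≠ 0 := by
    intro h
    apply hx3
    linear_combination (x ^ 2 - x * δ + δ ^ 2) * h - (δ + 1) * hδ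
  set d := algebraMap K L δ
  have hroot : (t - 1) * (t + d) = 0 := by
    refine sub_one_mul_add_eq_zero_of_trace_norm_eqs (X := algebraMap K L x)
      (s := t ^ Fintype.card K) ((map_ne_zero _).2 hδ0) ?_ ?_ ?_ ?_
    · rwa [← map_add, map_ne_zero]
    · simpa using congrArg (algebraMap K L) hδ
    · rw [← h1]; ring
    · rw [← h2]; simp only [map_mul, map_sub, map_one]; ring
  rcases mul_eq_zero.1 hroot with h | h
  · exact ht ⟨1, by rw [map_one]; linear_combination -h⟩
  · exact ht ⟨-δ, by rw [map_neg]; linear_combination -h⟩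

/-- Let `q` be a prime power and `x ∈ GF(q)` with `x ≠ 0` and `x³ ≠ 1`. Then there are no
`δ ∈ GF(q) \ {0,1}` and `t ∈ GF(q²) \ GF(q)` satisfying simultaneously
`δ t^{q+1} + (δ-1)(t^q + t) - 1 = 0` and
`δ x t^{q+1} + (1-δ-x) t^q + δ((δ-1)x - δ) t + δ = 0`. -/
theorem statement4 (q : ℕ) (K L : Type*) [Field K] [Field L] [Algebra K L]
    [Fintype K] [Fintype L] (hK : Fintype.card K = q) (hL : Fintype.card L = q ^ 2)
    (x : K) (hx0 : x ≠ 0) (hx3 : x ^ 3 ≠ 1) :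
    ¬ ∃ (δ : K) (t : L), δ ≠ 0 ∧ δ ≠ 1 ∧ t ∉ (algebraMap K L).range ∧
      algebraMap K L δ * t ^ (q + 1) + (algebraMap K L δ - 1) * (t ^ q + t) - 1 = 0 ∧
      algebraMap K L (δ * x) * t ^ (q + 1) + algebraMap K L (1 - δ - x) * t ^ q +
        algebraMap K L (δ * ((δ - 1) * x - δ)) * t + algebraMap K L δ = 0 :=
  statement4_general q K L hK hL x hx3
end

section
/- In PG(3,q) with q > 2, let ℓ₁, ℓ₂, ℓ₃ be three pairwise skew lines lying in the opposite regulus of a hyperbolic quadric Q⁺(3,q), and let r be a line external to Q⁺(3,q). Then the set B of the 4(q+1) points of ℓ₁ ∪ ℓ₂ ∪ ℓ₃ ∪ r is a minimal cutting blocking set: B is a cutting blocking set but for every point P ∈ B, B \ {P} is not a cutting blocking set. -/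
/-!
A line meeting `ℓ₁`, `ℓ₂`, `ℓ₃` meets the quadric in three points, so it lies on the quadric and
misses the external line `r`: no line meets all four lines.

Cutting: in a plane `U`, the points of the union span a subspace meeting all four lines. It
contains points of the skew lines `ℓ₁` and `ℓ₂`, so it is not a point; it is not a line either,
so it is `U`.

Minimality: for `P` on one of the four lines, take a transversal `T` of the other three such that
the plane `⟨T, P⟩` contains none of them. That plane meets the union minus `P` inside `T`, which
misses `P`. For `q > 2` such a `T` exists: the transversals through the `q + 1 ≥ 4` points of one
line are distinct, while each of the three planes spanned by `P` and one of the lines contains at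
most one transversal, as distinct transversals are skew.
-/

open scoped LinearAlgebra.Projectivization
open Projectivization Module

/-- A plane (hyperplane) of `PG(3, q) = ℙ F (Fin 4 → F)`. -/
def IsProjHyperplane {K V : Type*} [Field K] [AddCommGroup V] [Module K V]
    (H : Set (ℙ K V)) : Prop :=
  ∃ f : V →ₗ[K] K, f ≠ 0 ∧ H = {p : ℙ K V | f p.rep = 0}

/-- A line of the projective space `ℙ K V`. -/
def IsProjLine {K V : Type*} [Field K] [AddCommGroup V] [Module K V]
    (ℓ : Set (ℙ K V)) : Prop :=
  ∃ W : Submodule K V, Module.finrank K W = 2 ∧ ℓ = {p : ℙ K V | p.submodule ≤ W}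

/-- A cutting blocking set: for every hyperplane `H`, the set `H ∩ X` spans `H`. -/
def IsCuttingBlockingSet {K V : Type*} [Field K] [AddCommGroup V] [Module K V]
    (X : Set (ℙ K V)) : Prop :=
  ∀ H : Set (ℙ K V), IsProjHyperplane H →
    Projectivization.Subspace.span (H ∩ X) = Projectivization.Subspace.span H

/-- A hyperbolic quadric `Q⁺(3, q)` of `PG(3, q)`: the image of the canonical quadric
`X₁X₄ = X₂X₃` under a projectivity. -/
def IsHyperbolicQuadric {F : Type*} [Field F] (S : Set (ℙ F (Fin 4 → F))) : Prop :=
  ∃ e : (Fin 4 → F) ≃ₗ[F] (Fin 4 → F),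
    S = {P : ℙ F (Fin 4 → F) | e P.rep 0 * e P.rep 3 = e P.rep 1 * e P.rep 2}


namespace Projectivization

variable {K V : Type*} [Field K] [AddCommGroup V] [Module K V]

lemma setOf_submodule_le_eq (W : Submodule K V) :
    {p : ℙ K V | p.submodule ≤ W} = W.projectivization := by
  ext p
  exact (W.mem_projectivization_iff_submodule_le p).symm

lemma submodule_le_iff_rep_mem {W : Submodule K V} {p : ℙ K V} :
    p.submodule ≤ W ↔ p.rep ∈ W := by
  rw [submodule_eq, Submodule.span_singleton_le_iff_mem]

lemma rep_mem_iff_mem_projectivization {W : Submodule K V} {p : ℙ K V} :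
    p.rep ∈ W ↔ p ∈ W.projectivization := by
  rw [Submodule.mem_projectivization_iff_submodule_le, submodule_le_iff_rep_mem]

lemma Subspace.submodule_span (S : Set (ℙ K V)) :
    Subspace.submodule (Subspace.span S) = Submodule.span K (Projectivization.rep '' S) := by
  refine eq_of_forall_ge_iff fun N => ?_
  rw [← OrderIso.le_symm_apply, Subspace.span_le_subspace_iff, Submodule.span_le,
    Set.image_subset_iff]
  exact ⟨fun h p hp => rep_mem_iff_mem_projectivization.mpr (h hp),
    fun h p hp => rep_mem_iff_mem_projectivization.mp (h hp)⟩

lemma eq_of_submodule_le [FiniteDimensional K V] {p p' : ℙ K V} {N : Submodule K V}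
    (hp : p.submodule ≤ N) (hp' : p'.submodule ≤ N) (hN : finrank K N ≤ 1) : p = p' := by
  have eqN (q : ℙ K V) (hq : q.submodule ≤ N) : q.submodule = N :=
    Submodule.eq_of_le_of_finrank_le hq (by rw [finrank_submodule]; exact hN)
  exact submodule_injective ((eqN p hp).trans (eqN p' hp').symm)

end Projectivization

namespace Submodule

variable {K V : Type*} [Field K] [AddCommGroup V] [Module K V]

lemma disjoint_projectivization_iff {W W' : Submodule K V} :
    Disjoint (W.projectivization : Set (ℙ K V)) W'.projectivization ↔ Disjoint W W' := by
  rw [Set.disjoint_left, disjoint_def]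
  constructor
  · intro h x hx hx'
    by_contra hx0
    exact h ((W.mk_mem_projectivization_iff hx0).mpr hx)
      ((W'.mk_mem_projectivization_iff hx0).mpr hx')
  · intro h p hp hp'
    exact p.rep_nonzero (h _ (rep_mem_iff_mem_projectivization.mpr hp)
      (rep_mem_iff_mem_projectivization.mpr hp'))

lemma projectivization_inter_eq_empty_iff {W W' : Submodule K V} :
    (W.projectivization : Set (ℙ K V)) ∩ W'.projectivization = ∅ ↔ Disjoint W W' := by
  rw [← Set.disjoint_iff_inter_eq_empty, disjoint_projectivization_iff]

lemma range_map_subtype_eq_projectivization (W : Submodule K V) :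
    Set.range (Projectivization.map W.subtype W.injective_subtype) = W.projectivization := by
  ext p
  constructor
  · rintro ⟨p, rfl⟩
    induction p using Projectivization.ind with
    | h w hw =>
      rw [Projectivization.map_mk]
      exact (W.mk_mem_projectivization_iff _).mpr w.2
  · induction p using Projectivization.ind with
    | h v hv =>
      intro hp
      have hvW : v ∈ W := (W.mk_mem_projectivization_iff hv).mp hp
      exact ⟨Projectivization.mk K ⟨v, hvW⟩ (by simpa using hv), Projectivization.map_mk _ _ _ _⟩

lemma ncard_projectivization [Finite K] {W : Submodule K V} (hW : finrank K W = 2) :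
    (W.projectivization : Set (ℙ K V)).ncard = Nat.card K + 1 := by
  rw [← range_map_subtype_eq_projectivization, ← Set.image_univ,
    Set.ncard_image_of_injective _ (Projectivization.map_injective _ _), Set.ncard_univ,
    Projectivization.card_of_finrank_two K W hW]

lemma not_disjoint_of_mem {A B : Submodule K V} {x : V} (hxA : x ∈ A) (hxB : x ∈ B)
    (hx : x ≠ 0) : ¬Disjoint A B := fun h => hx (disjoint_def.mp h x hxA hxB)

lemma sup_span_singleton_inf_le {T X : Submodule K V} {v : V} (hv : v ∉ X ⊔ T) :
    (T ⊔ K ∙ v) ⊓ X ≤ T :=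
  calc (T ⊔ K ∙ v) ⊓ X ≤ (T ⊔ K ∙ v) ⊓ (X ⊔ T) := inf_le_inf_left _ le_sup_left
    _ = T ⊔ (K ∙ v) ⊓ (X ⊔ T) := sup_inf_assoc_of_le _ le_sup_right
    _ = T := by rw [(disjoint_span_singleton_of_notMem hv).symm.eq_bot, sup_bot_eq]

lemma sup_span_singleton_inf_eq {T D : Submodule K V} {v : V} (hTD : Disjoint T D)
    (hv : v ∈ D) : (T ⊔ K ∙ v) ⊓ D = K ∙ v := by
  rw [sup_comm, sup_inf_assoc_of_le _ ((span_singleton_le_iff_mem v D).mpr hv), hTD.eq_bot,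
    sup_bot_eq]

variable [FiniteDimensional K V]

lemma finrank_sup_of_disjoint {A B : Submodule K V} (h : Disjoint A B) :
    finrank K ↥(A ⊔ B) = finrank K A + finrank K B := by
  rw [← finrank_sup_add_finrank_inf_eq, h.eq_bot, finrank_bot, add_zero]

lemma not_disjoint_of_finrank_lt {A B S : Submodule K V} (hA : A ≤ S) (hB : B ≤ S)
    (h : finrank K S < finrank K A + finrank K B) : ¬Disjoint A B := fun hAB => by
  have := finrank_mono (sup_le hA hB)
  rw [finrank_sup_of_disjoint hAB] at this
  omega

lemma two_le_finrank_inf_sup_inf {M A B : Submodule K V} (hA : ¬Disjoint M A)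
    (hB : ¬Disjoint M B) (hAB : Disjoint (M ⊓ A) (M ⊓ B)) :
    2 ≤ finrank K ↥(M ⊓ A ⊔ M ⊓ B) := by
  rw [finrank_sup_of_disjoint hAB]
  have hA' := one_le_finrank_iff.mpr (disjoint_iff.not.mp hA)
  have hB' := one_le_finrank_iff.mpr (disjoint_iff.not.mp hB)
  omega

lemma le_of_not_disjoint_of_finrank_eq_one {X I : Submodule K V} (hI : finrank K I = 1)
    (h : ¬Disjoint X I) : I ≤ X := by
  have hXI : X ⊓ I = I := eq_of_le_of_finrank_le inf_le_right
    (hI ▸ one_le_finrank_iff.mpr (disjoint_iff.not.mp h))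
  exact hXI ▸ inf_le_left

lemma finrank_inf_le_one {A B : Submodule K V} (hA : finrank K A = 2) (hB : finrank K B = 2)
    (hne : A ≠ B) : finrank K ↥(A ⊓ B) ≤ 1 := by
  by_contra! h
  have hA' := eq_of_le_of_finrank_le (inf_le_left : A ⊓ B ≤ A) (by omega)
  have hB' := eq_of_le_of_finrank_le (inf_le_right : A ⊓ B ≤ B) (by omega)
  exact hne (hA'.symm.trans hB')

lemma finrank_sup_le_of_not_disjoint {A B : Submodule K V} (h : ¬Disjoint A B) :
    finrank K ↥(A ⊔ B) + 1 ≤ finrank K A + finrank K B := by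
  have := one_le_finrank_iff.mpr (disjoint_iff.not.mp h)
  have := finrank_sup_add_finrank_inf_eq A B
  omega

lemma le_sup_span_singleton_of_mem_sup {X T : Submodule K V} (hX : finrank K X = 2)
    (hT : finrank K T = 2) (hXT : ¬Disjoint X T) {v : V} (hvX : v ∉ X) (hv : v ∈ X ⊔ T) :
    T ≤ X ⊔ K ∙ v := by
  have hle : X ⊔ K ∙ v ≤ X ⊔ T := sup_le le_sup_left ((span_singleton_le_iff_mem v _).mpr hv)
  have := finrank_sup_le_of_not_disjoint hXT
  rw [eq_of_le_of_finrank_le hle (by rw [finrank_sup_span_singleton hvX]; omega)]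
  exact le_sup_right

end Submodule

section Hyperplanes

variable {K V : Type*} [Field K] [AddCommGroup V] [Module K V] [FiniteDimensional K V]

lemma isProjHyperplane_iff {H : Set (ℙ K V)} :
    IsProjHyperplane H ↔
      ∃ U : Submodule K V, finrank K U + 1 = finrank K V ∧ H = U.projectivization := by
  constructor
  · rintro ⟨f, hf, rfl⟩
    refine ⟨LinearMap.ker f, Module.Dual.finrank_ker_add_one_of_ne_zero hf, ?_⟩
    ext p
    exact rep_mem_iff_mem_projectivization (W := LinearMap.ker f)
  · rintro ⟨U, hU, rfl⟩
    have hlt : U < ⊤ := lt_top_iff_ne_top.mpr fun h => by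
      rw [h, finrank_top] at hU; omega
    obtain ⟨f, hf, hUf⟩ := U.exists_dual_map_eq_bot_of_lt_top hlt inferInstance
    have hker : U = LinearMap.ker f :=
      Submodule.eq_of_le_of_finrank_eq (LinearMap.le_ker_iff_map.mpr hUf)
        (by have := Module.Dual.finrank_ker_add_one_of_ne_zero hf; omega)
    refine ⟨f, hf, ?_⟩
    ext p
    rw [hker]
    exact (rep_mem_iff_mem_projectivization (W := LinearMap.ker f)).symm

lemma isCuttingBlockingSet_iff {X : Set (ℙ K V)} :
    IsCuttingBlockingSet X ↔ ∀ U : Submodule K V, finrank K U + 1 = finrank K V →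
      U ≤ Submodule.span K (Projectivization.rep '' (U.projectivization ∩ X)) := by
  have hspan (U : Submodule K V) :
      Submodule.span K (Projectivization.rep '' (U.projectivization ∩ X)) ≤ U := by
    rw [Submodule.span_le, Set.image_subset_iff]
    exact fun p hp => rep_mem_iff_mem_projectivization.mpr hp.1
  simp only [IsCuttingBlockingSet, isProjHyperplane_iff]
  constructor
  · intro h U hU
    have := congrArg Subspace.submodule (h _ ⟨U, hU, rfl⟩)
    rw [Subspace.submodule_span, Subspace.span_coe, Subspace.submodule.apply_symm_apply] at this
    exact this.ge
  · rintro h H ⟨U, hU, rfl⟩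
    rw [Subspace.span_coe, ← Subspace.submodule.injective.eq_iff, Subspace.submodule_span,
      Subspace.submodule.apply_symm_apply]
    exact (hspan U).antisymm (h U hU)

end Hyperplanes

section Transversals

open Submodule

variable {K V : Type*} [Field K] [AddCommGroup V] [Module K V]

def IsTransversal (A B C T : Submodule K V) : Prop :=
  finrank K T = 2 ∧ ¬Disjoint T A ∧ ¬Disjoint T B ∧ ¬Disjoint T C

variable [FiniteDimensional K V] {A B C : Submodule K V}

lemma exists_isTransversal_mem (hV : finrank K V = 4) (hB : finrank K B = 2)
    (hC : finrank K C = 2) (hAB : Disjoint A B) (hAC : Disjoint A C) {x : V} (hxA : x ∈ A)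
    (hx : x ≠ 0) : ∃ T, IsTransversal A B C T ∧ x ∈ T := by
  have hxB : x ∉ B := fun h => not_disjoint_of_mem hxA h hx hAB
  have hS : finrank K ↥(B ⊔ K ∙ x) = 3 := by rw [finrank_sup_span_singleton hxB, hB]
  obtain ⟨y, hyC, hyS, hy⟩ : ∃ y ∈ C, y ∈ B ⊔ K ∙ x ∧ y ≠ 0 := by
    have := not_disjoint_of_finrank_lt (A := C) (B := B ⊔ K ∙ x) le_top le_top
      (by rw [finrank_top, hV, hC, hS]; omega)
    simpa [disjoint_def] using this
  have hyx : y ∉ K ∙ x := fun h =>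
    not_disjoint_of_mem ((span_singleton_le_iff_mem x A).mpr hxA h) hyC hy hAC
  have hxT : x ∈ K ∙ x ⊔ K ∙ y := mem_sup_left (mem_span_singleton_self x)
  have hyT : y ∈ K ∙ x ⊔ K ∙ y := mem_sup_right (mem_span_singleton_self y)
  have hT : finrank K ↥(K ∙ x ⊔ K ∙ y) = 2 := by
    rw [finrank_sup_span_singleton hyx, finrank_span_singleton hx]
  refine ⟨K ∙ x ⊔ K ∙ y, ⟨hT, not_disjoint_of_mem hxT hxA hx, ?_,
    not_disjoint_of_mem hyT hyC hy⟩, hxT⟩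
  refine not_disjoint_of_finrank_lt (S := B ⊔ K ∙ x) ?_ le_sup_left (by rw [hS, hT, hB]; omega)
  exact sup_le ((span_singleton_le_iff_mem x _).mpr (mem_sup_right (mem_span_singleton_self x)))
    ((span_singleton_le_iff_mem y _).mpr hyS)

/-- Otherwise `T` and `T'` meet in a point `I` and span a plane `S`. Each of `A`, `B`, `C` meets
both, so it either lies in `S` or passes through `I`; but two skew lines cannot both lie in a
plane, nor both pass through `I`. -/
lemma IsTransversal.disjoint (hA : finrank K A = 2) (hB : finrank K B = 2)
    (hC : finrank K C = 2) (hAB : Disjoint A B) (hAC : Disjoint A C) (hBC : Disjoint B C)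
    {T T' : Submodule K V} (hT : IsTransversal A B C T) (hT' : IsTransversal A B C T')
    (hne : T ≠ T') : Disjoint T T' := by
  by_contra hTT'
  have hI : finrank K ↥(T ⊓ T') = 1 := le_antisymm (finrank_inf_le_one hT.1 hT'.1 hne)
    (one_le_finrank_iff.mpr (disjoint_iff.not.mp hTT'))
  have hS : finrank K ↥(T ⊔ T') ≤ 3 := by
    have := finrank_sup_le_of_not_disjoint hTT'; have := hT.1; have := hT'.1; omega
  have hcases (X : Submodule K V) (hX : finrank K X = 2) (hXT : ¬Disjoint T X)
      (hXT' : ¬Disjoint T' X) : X ≤ T ⊔ T' ∨ T ⊓ T' ≤ X := by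
    by_cases hXI : Disjoint X (T ⊓ T')
    · left
      have hle : X ⊓ T ⊔ X ⊓ T' ≤ X := sup_le inf_le_left inf_le_left
      have h2 := two_le_finrank_inf_sup_inf (disjoint_comm.not.mp hXT)
        (disjoint_comm.not.mp hXT') (disjoint_iff_inf_le.mpr <| le_trans
          (le_inf (inf_le_left.trans inf_le_left)
            (le_inf (inf_le_left.trans inf_le_right) (inf_le_right.trans inf_le_right)))
          (disjoint_iff_inf_le.mp hXI))
      rw [← eq_of_le_of_finrank_le hle (by omega)]
      exact sup_le_sup inf_le_right inf_le_right
    · exact Or.inr (le_of_not_disjoint_of_finrank_eq_one hI hXI)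
  have hin (X Y : Submodule K V) (hX : finrank K X = 2) (hY : finrank K Y = 2)
      (hXY : Disjoint X Y) (hXS : X ≤ T ⊔ T') (hYS : Y ≤ T ⊔ T') : False :=
    not_disjoint_of_finrank_lt hXS hYS (by omega) hXY
  have hthrough (X Y : Submodule K V) (hXY : Disjoint X Y) (hX : T ⊓ T' ≤ X)
      (hY : T ⊓ T' ≤ Y) : False :=
    disjoint_iff.not.mp hTT' (le_bot_iff.mp (hXY.eq_bot ▸ le_inf hX hY))
  rcases hcases A hA hT.2.1 hT'.2.1 with hA' | hA' <;>
    rcases hcases B hB hT.2.2.1 hT'.2.2.1 with hB' | hB' <;>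
    rcases hcases C hC hT.2.2.2 hT'.2.2.2 with hC' | hC'
  all_goals first
    | exact hin A B hA hB hAB hA' hB' | exact hin A C hA hC hAC hA' hC'
    | exact hin B C hB hC hBC hB' hC' | exact hthrough A B hAB hA' hB'
    | exact hthrough A C hAC hA' hC' | exact hthrough B C hBC hB' hC'

lemma IsTransversal.eq_of_le (hA : finrank K A = 2) (hB : finrank K B = 2)
    (hC : finrank K C = 2) (hAB : Disjoint A B) (hAC : Disjoint A C) (hBC : Disjoint B C)
    {T T' P : Submodule K V} (hT : IsTransversal A B C T) (hT' : IsTransversal A B C T')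
    (hP : finrank K P = 3) (hTP : T ≤ P) (hT'P : T' ≤ P) : T = T' := by
  by_contra hne
  exact not_disjoint_of_finrank_lt hTP hT'P (by rw [hP, hT.1, hT'.1]; omega)
    (hT.disjoint hA hB hC hAB hAC hBC hT' hne)

lemma exists_isTransversal_notMem_sup [Finite K] (hK : 2 < Nat.card K) (hV : finrank K V = 4)
    (hA : finrank K A = 2) (hB : finrank K B = 2) (hC : finrank K C = 2)
    (hAB : Disjoint A B) (hAC : Disjoint A C) (hBC : Disjoint B C) {v : V} (hvA : v ∉ A)
    (hvB : v ∉ B) (hvC : v ∉ C) :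
    ∃ T, IsTransversal A B C T ∧ v ∉ A ⊔ T ∧ v ∉ B ⊔ T ∧ v ∉ C ⊔ T := by
  by_contra! hbad
  have : Finite V := Module.finite_of_finite K
  let bad (X : Submodule K V) : Set (ℙ K V) :=
    {p | p.rep ∈ A ∧ ∃ T, IsTransversal A B C T ∧ p.rep ∈ T ∧ T ≤ X ⊔ K ∙ v}
  have hbad_le (X : Submodule K V) (hX : finrank K X = 2) (hvX : v ∉ X) :
      (bad X).ncard ≤ 1 := by
    rw [Set.ncard_le_one_iff]
    rintro p p' ⟨hpA, T, hT, hpT, hTX⟩ ⟨hp'A, T', hT', hp'T, hT'X⟩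
    have hP : finrank K ↥(X ⊔ K ∙ v) = 3 := by rw [finrank_sup_span_singleton hvX, hX]
    obtain rfl := hT.eq_of_le hA hB hC hAB hAC hBC hT' hP hTX hT'X
    have hTA : T ≠ A := by rintro rfl; exact hT.2.2.1 hAB
    exact Projectivization.eq_of_submodule_le (N := T ⊓ A)
      (Projectivization.submodule_le_iff_rep_mem.mpr ⟨hpT, hpA⟩)
      (Projectivization.submodule_le_iff_rep_mem.mpr ⟨hp'T, hp'A⟩)
      (finrank_inf_le_one hT.1 hA hTA)
  have hcover : (A.projectivization : Set (ℙ K V)) ⊆ bad A ∪ bad B ∪ bad C := by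
    intro p hp
    have hpA := Projectivization.rep_mem_iff_mem_projectivization.mpr hp
    obtain ⟨T, hT, hpT⟩ := exists_isTransversal_mem hV hB hC hAB hAC hpA p.rep_nonzero
    by_cases h1 : v ∈ A ⊔ T
    · exact Or.inl (Or.inl ⟨hpA, T, hT, hpT, le_sup_span_singleton_of_mem_sup hA hT.1
        (disjoint_comm.not.mp hT.2.1) hvA h1⟩)
    by_cases h2 : v ∈ B ⊔ T
    · exact Or.inl (Or.inr ⟨hpA, T, hT, hpT, le_sup_span_singleton_of_mem_sup hB hT.1
        (disjoint_comm.not.mp hT.2.2.1) hvB h2⟩)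
    · exact Or.inr ⟨hpA, T, hT, hpT, le_sup_span_singleton_of_mem_sup hC hT.1
        (disjoint_comm.not.mp hT.2.2.2) hvC (hbad T hT h1 h2)⟩
  have hbad3 : (bad A ∪ bad B ∪ bad C).ncard ≤ 3 :=
    calc (bad A ∪ bad B ∪ bad C).ncard ≤ (bad A).ncard + (bad B).ncard + (bad C).ncard :=
          (Set.ncard_union_le _ _).trans (add_le_add_left (Set.ncard_union_le _ _) _)
      _ ≤ 1 + 1 + 1 := by
          gcongr
          exacts [hbad_le A hA hvA, hbad_le B hB hvB, hbad_le C hC hvC]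
  have := Set.ncard_le_ncard hcover
  rw [ncard_projectivization hA] at this
  omega

end Transversals

section FourLines

open Submodule

variable {K V : Type*} [Field K] [AddCommGroup V] [Module K V] [FiniteDimensional K V]
variable {A B C D : Submodule K V}

theorem isCuttingBlockingSet_union_four (hV : finrank K V = 4) (hA : finrank K A = 2)
    (hB : finrank K B = 2) (hC : finrank K C = 2) (hD : finrank K D = 2) (hAB : Disjoint A B)
    (hABCD : ∀ T : Submodule K V, finrank K T = 2 → ¬Disjoint T A → ¬Disjoint T B →
      ¬Disjoint T C → ¬Disjoint T D → False) :
    IsCuttingBlockingSet (A.projectivization ∪ B.projectivization ∪ C.projectivization ∪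
      D.projectivization : Set (ℙ K V)) := by
  rw [isCuttingBlockingSet_iff]
  intro U hU
  set X : Set (ℙ K V) := A.projectivization ∪ B.projectivization ∪ C.projectivization ∪
    D.projectivization
  set M := Submodule.span K (Projectivization.rep '' ((U.projectivization : Set (ℙ K V)) ∩ X))
  have hMU : M ≤ U := by
    rw [Submodule.span_le, Set.image_subset_iff]
    exact fun p hp => rep_mem_iff_mem_projectivization.mpr hp.1
  have hmeet (Y : Submodule K V) (hY : finrank K Y = 2)
      (hYX : (Y.projectivization : Set (ℙ K V)) ⊆ X) : ¬Disjoint M Y := by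
    obtain ⟨y, hyU, hyY, hy⟩ : ∃ y ∈ U, y ∈ Y ∧ y ≠ 0 := by
      simpa [disjoint_def] using not_disjoint_of_finrank_lt (A := U) (B := Y) le_top le_top
        (by rw [finrank_top]; omega)
    have hp : Projectivization.mk K y hy ∈ (U.projectivization : Set (ℙ K V)) ∩ X :=
      ⟨(mk_mem_projectivization_iff U hy).mpr hyU, hYX ((mk_mem_projectivization_iff Y hy).mpr hyY)⟩
    refine not_disjoint_of_mem (subset_span ⟨_, hp, rfl⟩) ?_ (rep_nonzero _)
    exact rep_mem_iff_mem_projectivization.mpr ((mk_mem_projectivization_iff Y hy).mpr hyY)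
  have hMA := hmeet A hA (fun p hp => Or.inl (Or.inl (Or.inl hp)))
  have hMB := hmeet B hB (fun p hp => Or.inl (Or.inl (Or.inr hp)))
  have hMC := hmeet C hC (fun p hp => Or.inl (Or.inr hp))
  have hMD := hmeet D hD (fun p hp => Or.inr hp)
  have hM2 : 2 ≤ finrank K M := (two_le_finrank_inf_sup_inf hMA hMB
    (hAB.mono inf_le_right inf_le_right)).trans (finrank_mono (sup_le inf_le_left inf_le_left))
  by_cases hM : finrank K M = 2
  · exact (hABCD M hM hMA hMB hMC hMD).elim
  · exact (eq_of_le_of_finrank_le hMU (by omega)).ge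

lemma not_isCuttingBlockingSet_diff_singleton_of_mem [Finite K] (hK : 2 < Nat.card K)
    (hV : finrank K V = 4) (hA : finrank K A = 2) (hB : finrank K B = 2) (hC : finrank K C = 2)
    (hAB : Disjoint A B) (hAC : Disjoint A C) (hBC : Disjoint B C) (hDA : Disjoint D A)
    (hDB : Disjoint D B) (hDC : Disjoint D C) (hABCD : ∀ T, IsTransversal A B C T → Disjoint T D)
    {X : Set (ℙ K V)}
    (hX : X ⊆ A.projectivization ∪ B.projectivization ∪ C.projectivization ∪ D.projectivization)
    {P : ℙ K V} (hP : P ∈ D.projectivization) : ¬IsCuttingBlockingSet (X \ {P}) := by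
  have hPD : P.rep ∈ D := rep_mem_iff_mem_projectivization.mpr hP
  have hnot {Y : Submodule K V} (hDY : Disjoint D Y) : P.rep ∉ Y :=
    fun h => not_disjoint_of_mem hPD h P.rep_nonzero hDY
  obtain ⟨T, hT, hvA, hvB, hvC⟩ := exists_isTransversal_notMem_sup hK hV hA hB hC hAB hAC hBC
    (hnot hDA) (hnot hDB) (hnot hDC)
  have hvT : P.rep ∉ T := fun h => hvA (mem_sup_right h)
  set U := T ⊔ K ∙ P.rep
  have hU : finrank K U + 1 = finrank K V := by
    rw [finrank_sup_span_singleton hvT, hT.1, hV]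
  have hUX : (U.projectivization : Set (ℙ K V)) ∩ (X \ {P}) ⊆ T.projectivization := by
    rintro p ⟨hpU, hpX, hpP⟩
    replace hpU : p.rep ∈ U := rep_mem_iff_mem_projectivization.mpr hpU
    refine rep_mem_iff_mem_projectivization.mp ?_
    have hline {Y : Submodule K V} (hvY : P.rep ∉ Y ⊔ T) (hpY : p ∈ Y.projectivization) :
        p.rep ∈ T :=
      sup_span_singleton_inf_le hvY ⟨hpU, rep_mem_iff_mem_projectivization.mpr hpY⟩
    rcases hX hpX with ((hpA | hpB) | hpC) | hpD
    · exact hline hvA hpA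
    · exact hline hvB hpB
    · exact hline hvC hpC
    · refine absurd (eq_of_submodule_le (N := K ∙ P.rep) ?_ (submodule_eq P).le ?_) hpP
      · rw [submodule_le_iff_rep_mem, ← sup_span_singleton_inf_eq (hABCD T hT) hPD]
        exact ⟨hpU, rep_mem_iff_mem_projectivization.mpr hpD⟩
      · rw [finrank_span_singleton P.rep_nonzero]
  intro hcut
  have hUT := (isCuttingBlockingSet_iff.mp hcut U hU).trans
    (Submodule.span_le.mpr (Set.image_subset_iff.mpr fun p hp =>
      rep_mem_iff_mem_projectivization.mpr (hUX hp)))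
  exact hvT (hUT (mem_sup_right (mem_span_singleton_self _)))

theorem not_isCuttingBlockingSet_union_four_diff_singleton [Finite K] (hK : 2 < Nat.card K)
    (hV : finrank K V = 4) (hA : finrank K A = 2) (hB : finrank K B = 2) (hC : finrank K C = 2)
    (hD : finrank K D = 2) (hAB : Disjoint A B) (hAC : Disjoint A C) (hAD : Disjoint A D)
    (hBC : Disjoint B C) (hBD : Disjoint B D) (hCD : Disjoint C D)
    (hABCD : ∀ T : Submodule K V, finrank K T = 2 → ¬Disjoint T A → ¬Disjoint T B →
      ¬Disjoint T C → ¬Disjoint T D → False) {P : ℙ K V}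
    (hP : P ∈ (A.projectivization ∪ B.projectivization ∪ C.projectivization ∪
      D.projectivization : Set (ℙ K V))) :
    ¬IsCuttingBlockingSet ((A.projectivization ∪ B.projectivization ∪ C.projectivization ∪
      D.projectivization : Set (ℙ K V)) \ {P}) := by
  rcases hP with ((hP | hP) | hP) | hP
  · exact not_isCuttingBlockingSet_diff_singleton_of_mem hK hV hB hC hD hBC hBD hCD hAB hAC hAD
      (fun T hT => by by_contra h; exact hABCD T hT.1 h hT.2.1 hT.2.2.1 hT.2.2.2)
      (by intro p; simp only [Set.mem_union]; tauto) hP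
  · exact not_isCuttingBlockingSet_diff_singleton_of_mem hK hV hA hC hD hAC hAD hCD hAB.symm hBC
      hBD (fun T hT => by by_contra h; exact hABCD T hT.1 hT.2.1 h hT.2.2.1 hT.2.2.2)
      (by intro p; simp only [Set.mem_union]; tauto) hP
  · exact not_isCuttingBlockingSet_diff_singleton_of_mem hK hV hA hB hD hAB hAD hBD hAC.symm
      hBC.symm hCD (fun T hT => by by_contra h; exact hABCD T hT.1 hT.2.1 hT.2.2.1 h hT.2.2.2)
      (by intro p; simp only [Set.mem_union]; tauto) hP
  · exact not_isCuttingBlockingSet_diff_singleton_of_mem hK hV hA hB hC hAB hAC hBC hAD.symm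
      hBD.symm hCD.symm (fun T hT => by by_contra h; exact hABCD T hT.1 hT.2.1 hT.2.2.1 hT.2.2.2 h)
      subset_rfl hP

lemma ncard_union_four [Finite K] (hA : finrank K A = 2) (hB : finrank K B = 2)
    (hC : finrank K C = 2) (hD : finrank K D = 2) (hAB : Disjoint A B) (hAC : Disjoint A C)
    (hAD : Disjoint A D) (hBC : Disjoint B C) (hBD : Disjoint B D) (hCD : Disjoint C D) :
    (A.projectivization ∪ B.projectivization ∪ C.projectivization ∪
      D.projectivization : Set (ℙ K V)).ncard = 4 * (Nat.card K + 1) := by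
  have : Finite V := Module.finite_of_finite K
  simp only [← disjoint_projectivization_iff (K := K)] at hAB hAC hAD hBC hBD hCD
  rw [Set.ncard_union_eq (Set.disjoint_union_left.mpr ⟨Set.disjoint_union_left.mpr ⟨hAD, hBD⟩,
      hCD⟩), Set.ncard_union_eq (Set.disjoint_union_left.mpr ⟨hAC, hBC⟩), Set.ncard_union_eq hAB,
    ncard_projectivization hA, ncard_projectivization hB, ncard_projectivization hC,
    ncard_projectivization hD]
  ring

end FourLines

section Quadrics

open Submodule

variable {K V : Type*} [Field K] [AddCommGroup V] [Module K V]

lemma QuadraticMap.rep_mk_eq_zero_iff (Φ : QuadraticForm K V) {v : V} (hv : v ≠ 0) :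
    Φ (Projectivization.mk K v hv).rep = 0 ↔ Φ v = 0 := by
  obtain ⟨a, ha⟩ := exists_smul_eq_mk_rep K v hv
  rw [← ha, Units.smul_def, QuadraticMap.map_smul, smul_eq_mul, mul_eq_zero, mul_self_eq_zero]
  simp

lemma QuadraticMap.forall_eq_zero_of_projectivization_subset (Φ : QuadraticForm K V)
    {W : Submodule K V} (h : (W.projectivization : Set (ℙ K V)) ⊆ {P | Φ P.rep = 0}) :
    ∀ w ∈ W, Φ w = 0 := by
  intro w hw
  rcases eq_or_ne w 0 with rfl | hw0
  · exact QuadraticMap.map_zero Φ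
  · exact (Φ.rep_mk_eq_zero_iff hw0).mp (h ((W.mk_mem_projectivization_iff hw0).mpr hw))

lemma QuadraticMap.ne_zero_of_projectivization_inter_eq_empty (Φ : QuadraticForm K V)
    {W : Submodule K V} (h : (W.projectivization : Set (ℙ K V)) ∩ {P | Φ P.rep = 0} = ∅) :
    ∀ w ∈ W, w ≠ 0 → Φ w ≠ 0 := fun w hw hw0 hΦ =>
  Set.eq_empty_iff_forall_notMem.mp h (Projectivization.mk K w hw0)
    ⟨(W.mk_mem_projectivization_iff hw0).mpr hw, (Φ.rep_mk_eq_zero_iff hw0).mpr hΦ⟩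

lemma QuadraticMap.map_smul_add_smul_of_eq_zero (Φ : QuadraticForm K V) {x y : V}
    (hx : Φ x = 0) (hy : Φ y = 0) (a b : K) :
    Φ (a • x + b • y) = a * b * QuadraticMap.polar Φ x y := by
  rw [QuadraticMap.map_add Φ, QuadraticMap.map_smul, QuadraticMap.map_smul, hx, hy,
    QuadraticMap.polar_smul_left, QuadraticMap.polar_smul_right]
  simp only [smul_eq_mul]
  ring

variable [FiniteDimensional K V]

lemma IsTransversal.quadraticForm_eq_zero (Φ : QuadraticForm K V) {A B C T : Submodule K V}
    (hAB : Disjoint A B) (hAC : Disjoint A C) (hBC : Disjoint B C)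
    (hΦA : ∀ x ∈ A, Φ x = 0) (hΦB : ∀ x ∈ B, Φ x = 0) (hΦC : ∀ x ∈ C, Φ x = 0)
    (hT : IsTransversal A B C T) : ∀ w ∈ T, Φ w = 0 := by
  obtain ⟨x, ⟨hxT, hxA⟩, hx⟩ := exists_mem_ne_zero_of_ne_bot (disjoint_iff.not.mp hT.2.1)
  obtain ⟨y, ⟨hyT, hyB⟩, hy⟩ := exists_mem_ne_zero_of_ne_bot (disjoint_iff.not.mp hT.2.2.1)
  obtain ⟨z, ⟨hzT, hzC⟩, hz⟩ := exists_mem_ne_zero_of_ne_bot (disjoint_iff.not.mp hT.2.2.2)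
  have hyx : y ∉ K ∙ x := fun h =>
    not_disjoint_of_mem ((span_singleton_le_iff_mem x A).mpr hxA h) hyB hy hAB
  have hTxy : K ∙ x ⊔ K ∙ y = T := eq_of_le_of_finrank_le
    (sup_le ((span_singleton_le_iff_mem x T).mpr hxT) ((span_singleton_le_iff_mem y T).mpr hyT))
    (by rw [hT.1, finrank_sup_span_singleton hyx, finrank_span_singleton hx])
  have hcomb {w : V} (hw : w ∈ T) : ∃ a b : K, a • x + b • y = w := by
    obtain ⟨u, hu, u', hu', rfl⟩ := mem_sup.mp (hTxy ▸ hw)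
    obtain ⟨a, rfl⟩ := mem_span_singleton.mp hu
    obtain ⟨b, rfl⟩ := mem_span_singleton.mp hu'
    exact ⟨a, b, rfl⟩
  have hpolar : QuadraticMap.polar Φ x y = 0 := by
    obtain ⟨a, b, rfl⟩ := hcomb hzT
    have ha : a ≠ 0 := by
      rintro rfl
      rw [zero_smul, zero_add] at hz hzC
      exact not_disjoint_of_mem (B.smul_mem b hyB) hzC hz hBC
    have hb : b ≠ 0 := by
      rintro rfl
      rw [zero_smul, add_zero] at hz hzC
      exact not_disjoint_of_mem (A.smul_mem a hxA) hzC hz hAC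
    have := hΦC _ hzC
    rw [Φ.map_smul_add_smul_of_eq_zero (hΦA x hxA) (hΦB y hyB)] at this
    simpa [ha, hb] using this
  intro w hw
  obtain ⟨a, b, rfl⟩ := hcomb hw
  rw [Φ.map_smul_add_smul_of_eq_zero (hΦA x hxA) (hΦB y hyB), hpolar, mul_zero]

lemma IsTransversal.disjoint_of_projectivization_inter_eq_empty (Φ : QuadraticForm K V)
    {A B C D T : Submodule K V} (hAB : Disjoint A B) (hAC : Disjoint A C) (hBC : Disjoint B C)
    (hA : (A.projectivization : Set (ℙ K V)) ⊆ {P | Φ P.rep = 0})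
    (hB : (B.projectivization : Set (ℙ K V)) ⊆ {P | Φ P.rep = 0})
    (hC : (C.projectivization : Set (ℙ K V)) ⊆ {P | Φ P.rep = 0})
    (hD : (D.projectivization : Set (ℙ K V)) ∩ {P | Φ P.rep = 0} = ∅)
    (hT : IsTransversal A B C T) : Disjoint T D :=
  disjoint_def.mpr fun w hwT hwD => by
    by_contra hw
    exact Φ.ne_zero_of_projectivization_inter_eq_empty hD w hwD hw
      (hT.quadraticForm_eq_zero Φ hAB hAC hBC (Φ.forall_eq_zero_of_projectivization_subset hA)
        (Φ.forall_eq_zero_of_projectivization_subset hB)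
        (Φ.forall_eq_zero_of_projectivization_subset hC) w hwT)

end Quadrics

lemma IsHyperbolicQuadric.exists_quadraticForm {F : Type*} [Field F] {S : Set (ℙ F (Fin 4 → F))}
    (hS : IsHyperbolicQuadric S) :
    ∃ Φ : QuadraticForm F (Fin 4 → F), S = {P | Φ P.rep = 0} := by
  obtain ⟨e, rfl⟩ := hS
  let f (i : Fin 4) : (Fin 4 → F) →ₗ[F] F := LinearMap.proj i ∘ₗ e.toLinearMap
  refine ⟨QuadraticMap.linMulLin (f 0) (f 3) - QuadraticMap.linMulLin (f 1) (f 2), ?_⟩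
  ext P
  simp [f, sub_eq_zero]

/-- In `PG(3, q)`, `q > 2`, the union `B` of three pairwise skew lines contained in a
hyperbolic quadric (one regulus) together with a line external to the quadric is a minimal
cutting blocking set of size `4(q+1)`. -/
theorem statement11 (q : ℕ) (F : Type*) [Field F] [Fintype F]
    (hq : Fintype.card F = q) (hq2 : 2 < q)
    (Q ℓ₁ ℓ₂ ℓ₃ r : Set (ℙ F (Fin 4 → F)))
    (hQ : IsHyperbolicQuadric Q)
    (hl₁ : IsProjLine ℓ₁) (hl₂ : IsProjLine ℓ₂) (hl₃ : IsProjLine ℓ₃)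
    (hl₁Q : ℓ₁ ⊆ Q) (hl₂Q : ℓ₂ ⊆ Q) (hl₃Q : ℓ₃ ⊆ Q)
    (h₁₂ : ℓ₁ ∩ ℓ₂ = ∅) (h₁₃ : ℓ₁ ∩ ℓ₃ = ∅) (h₂₃ : ℓ₂ ∩ ℓ₃ = ∅)
    (hr : IsProjLine r) (hrQ : r ∩ Q = ∅) :
    IsCuttingBlockingSet (ℓ₁ ∪ ℓ₂ ∪ ℓ₃ ∪ r) ∧
      (ℓ₁ ∪ ℓ₂ ∪ ℓ₃ ∪ r).ncard = 4 * (q + 1) ∧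
      ∀ P ∈ ℓ₁ ∪ ℓ₂ ∪ ℓ₃ ∪ r,
        ¬ IsCuttingBlockingSet ((ℓ₁ ∪ ℓ₂ ∪ ℓ₃ ∪ r) \ {P}) := by
  obtain ⟨Φ, rfl⟩ := hQ.exists_quadraticForm
  obtain ⟨W₁, hW₁, rfl⟩ := hl₁
  obtain ⟨W₂, hW₂, rfl⟩ := hl₂
  obtain ⟨W₃, hW₃, rfl⟩ := hl₃
  obtain ⟨Wr, hWr, rfl⟩ := hr
  simp only [setOf_submodule_le_eq] at *
  have hV : finrank F (Fin 4 → F) = 4 := by simp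
  have hK : 2 < Nat.card F := by rwa [Nat.card_eq_fintype_card, hq]
  rw [Submodule.projectivization_inter_eq_empty_iff] at h₁₂ h₁₃ h₂₃
  have hskew_r (W : Submodule F (Fin 4 → F))
      (hW : (W.projectivization : Set _) ⊆ {P : ℙ F (Fin 4 → F) | Φ P.rep = 0}) :
      Disjoint W Wr :=
    (Submodule.projectivization_inter_eq_empty_iff.mp
      (Set.subset_eq_empty (Set.inter_subset_inter_right _ hW) hrQ)).symm
  have hno_line (T : Submodule F (Fin 4 → F)) (hT : finrank F T = 2) (h₁ : ¬Disjoint T W₁)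
      (h₂ : ¬Disjoint T W₂) (h₃ : ¬Disjoint T W₃) (hTr : ¬Disjoint T Wr) : False :=
    hTr <| IsTransversal.disjoint_of_projectivization_inter_eq_empty Φ h₁₂ h₁₃ h₂₃ hl₁Q hl₂Q hl₃Q
      hrQ ⟨hT, h₁, h₂, h₃⟩
  refine ⟨isCuttingBlockingSet_union_four hV hW₁ hW₂ hW₃ hWr h₁₂ hno_line, ?_,
    fun P hP => not_isCuttingBlockingSet_union_four_diff_singleton hK hV hW₁ hW₂ hW₃ hWr h₁₂ h₁₃
      (hskew_r W₁ hl₁Q) h₂₃ (hskew_r W₂ hl₂Q) (hskew_r W₃ hl₃Q) hno_line hP⟩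
  rw [ncard_union_four hW₁ hW₂ hW₃ hWr h₁₂ h₁₃ (hskew_r W₁ hl₁Q) h₂₃ (hskew_r W₂ hl₂Q)
    (hskew_r W₃ hl₃Q), Nat.card_eq_fintype_card, hq]
end
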